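/- arXiv:2009.00074 — 2 statements merged into one kernel-verified Lean document; each statement's English description precedes it below -/
import Mathlib

section
/- Let R be a commutative ring, σ : R → R a ring endomorphism, and a ∈ R an element with σ(a) = a. Let f ≥ 1 and c ≥ 0 be integers. Let V₀, V₁, …, V_f be R-modules with V_f = V₀, and for each i = 0, …, f−1 let φᵢ : Vᵢ → V_{i+1} be an additive map that is σ-semilinear, i.e. φᵢ(r·v) = σ(r)·φᵢ(v) for all r ∈ R, v ∈ Vᵢ. Assume that for every i, the submodule a^c·V_{i+1} is contained in the R-submodule of V_{i+1} generated by the image φᵢ(Vᵢ). Then a^{c·f}·V₀ is contained in the R-submodule of V₀ generated by the image of the composite (φ_{f−1} ∘ ⋯ ∘ φ₁ ∘ φ₀)(V₀). -/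
universe u

open Fin.NatCast

/-- Iterated composite of a cyclic family of maps `φ i : V i → V (i + 1)` indexed by
`Fin f` (indices taken cyclically): `cyclicIter φ n = φ_{n-1} ∘ ⋯ ∘ φ₁ ∘ φ₀ : V 0 → V n`. -/
def cyclicIter {f : ℕ} [NeZero f] {V : Fin f → Type u}
    (φ : ∀ i : Fin f, V i → V (i + 1)) : ∀ n : ℕ, V 0 → V ((n : Fin f))
  | 0 => fun x => cast (congrArg V (by simp)) x
  | n + 1 => fun x =>
      cast (congrArg V (Nat.cast_add_one (R := Fin f) n).symm)
        (φ ((n : Fin f)) (cyclicIter φ n x))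

/-- The full cyclic composite `φ_{f-1} ∘ ⋯ ∘ φ₁ ∘ φ₀ : V 0 → V f = V 0`
(the identification `V f = V 0` being realized by the cyclic indexing `Fin f`). -/
def cyclicComp {f : ℕ} [NeZero f] {V : Fin f → Type u}
    (φ : ∀ i : Fin f, V i → V (i + 1)) : V 0 → V 0 :=
  fun x => cast (congrArg V (Fin.natCast_self f)) (cyclicIter φ f x)

/-!
Induction along the cycle: if `a^(c·n) • V n` lies in the span of the image of
`φ_{n-1} ∘ ⋯ ∘ φ₀`, apply `φ n`. Since `σ` fixes `a`, the semilinear map `φ n` commutes with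
multiplication by `a^(c·n)`, so it carries `a^(c·n) • span (range φ n)`, which contains
`a^(c·(n+1)) • V (n+1)`, into the span of the image of `φ_n ∘ ⋯ ∘ φ₀`.
-/

theorem LinearMap.smul_mem_span_image_of_mem_span_range {R M N : Type*} [CommSemiring R]
    [AddCommMonoid M] [AddCommMonoid N] [Module R M] [Module R N] {σ : R →+* R} (g : M →ₛₗ[σ] N)
    {b : R} (hb : σ b = b) {T : Set M} (hT : ∀ m, b • m ∈ Submodule.span R T) {x : N}
    (hx : x ∈ Submodule.span R (Set.range g)) : b • x ∈ Submodule.span R (g '' T) := by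
  suffices Submodule.span R (Set.range g) ≤
      (Submodule.span R (g '' T)).comap (LinearMap.lsmul R N b) from this hx
  refine Submodule.span_le.mpr (Set.range_subset_iff.mpr fun m => ?_)
  show b • g m ∈ Submodule.span R (g '' T)
  rw [← hb, ← map_smulₛₗ]
  exact Submodule.image_span_subset_span g T ⟨_, hT m, rfl⟩

theorem smul_cast_mem_span_image {R ι : Type*} [Semiring R] {V : ι → Type*}
    [∀ i, AddCommMonoid (V i)] [∀ i, Module R (V i)] {s t : ι} (h : s = t) {S : Set (V s)}
    {r : R} {x : V s} (hx : r • x ∈ Submodule.span R S) :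
    r • cast (congrArg V h) x ∈ Submodule.span R (cast (congrArg V h) '' S) := by
  subst h
  simpa using hx

theorem range_cyclicIter_succ {f : ℕ} [NeZero f] {V : Fin f → Type u}
    (φ : ∀ i : Fin f, V i → V (i + 1)) (n : ℕ) :
    Set.range (cyclicIter φ (n + 1)) =
      cast (congrArg V (Nat.cast_add_one (R := Fin f) n).symm) ''
        (φ n '' Set.range (cyclicIter φ n)) := by
  rw [← Set.range_comp, ← Set.range_comp]
  rfl

theorem range_cyclicComp {f : ℕ} [NeZero f] {V : Fin f → Type u}
    (φ : ∀ i : Fin f, V i → V (i + 1)) :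
    Set.range (cyclicComp φ) =
      cast (congrArg V (Fin.natCast_self f)) '' Set.range (cyclicIter φ f) := by
  rw [← Set.range_comp]
  rfl

theorem pow_mul_smul_mem_span_range_cyclicIter {R : Type*} [CommSemiring R] {σ : R →+* R}
    {a : R} (ha : σ a = a) {f : ℕ} [NeZero f] {c : ℕ} {V : Fin f → Type u}
    [∀ i, AddCommMonoid (V i)] [∀ i, Module R (V i)] {φ : ∀ i : Fin f, V i →ₛₗ[σ] V (i + 1)}
    (hφ : ∀ i : Fin f, ∀ v : V (i + 1), a ^ c • v ∈ Submodule.span R (Set.range ⇑(φ i)))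
    (n : ℕ) (w : V n) :
    a ^ (c * n) • w ∈ Submodule.span R (Set.range (cyclicIter (fun i => ⇑(φ i)) n)) := by
  induction n with
  | zero =>
    rw [Nat.mul_zero, pow_zero, one_smul]
    exact Submodule.subset_span ⟨cast (congrArg V Nat.cast_zero) w, by simp [cyclicIter]⟩
  | succ n ih =>
    have e : (n : Fin f) + 1 = ((n + 1 : ℕ) : Fin f) := (Nat.cast_add_one n).symm
    set w' : V (n + 1) := cast (congrArg V e.symm) w
    have hφw' : a ^ (c * n) • a ^ c • w' ∈
        Submodule.span R (φ n '' Set.range (cyclicIter (fun i => ⇑(φ i)) n)) :=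
      (φ n).smul_mem_span_image_of_mem_span_range (by rw [map_pow, ha]) ih (hφ n w')
    rw [smul_smul, ← pow_add, ← Nat.mul_succ] at hφw'
    simpa [w', range_cyclicIter_succ] using smul_cast_mem_span_image e hφw'

/-- If `φ₀, …, φ_{f-1}` are `σ`-semilinear maps in a cycle `V 0 → V 1 → ⋯ → V f = V 0`
of modules over a commutative ring `R`, `a ∈ R` is fixed by `σ`, and for each `i` the
submodule `a^c • V (i+1)` is contained in the `R`-span of the image of `φ i`, then
`a^(c·f) • V 0` is contained in the `R`-span of the image of the full composite
`φ_{f-1} ∘ ⋯ ∘ φ₀`. -/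
theorem pow_smul_mem_span_range_cyclicComp
    {R : Type*} [CommRing R] (σ : R →+* R) (a : R) (ha : σ a = a)
    (f : ℕ) [NeZero f] (c : ℕ)
    (V : Fin f → Type u) [∀ i, AddCommGroup (V i)] [∀ i, Module R (V i)]
    (φ : ∀ i : Fin f, V i →ₛₗ[σ] V (i + 1))
    (hφ : ∀ i : Fin f, ∀ v : V (i + 1),
      a ^ c • v ∈ Submodule.span R (Set.range ⇑(φ i)))
    (v : V 0) :
    a ^ (c * f) • v ∈
      Submodule.span R (Set.range (cyclicComp (fun i => ⇑(φ i)))) := by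
  have h0 : ((f : ℕ) : Fin f) = 0 := Fin.natCast_self f
  have hv := pow_mul_smul_mem_span_range_cyclicIter ha hφ f (cast (congrArg V h0.symm) v)
  simpa [range_cyclicComp] using smul_cast_mem_span_image h0 hv
end

section
/- Let R be a discrete valuation ring with fraction field F, uniformizer π, and normalized additive valuation v (so v(π) = 1). Let r, f ≥ 1 and c ≥ 0 be integers. Let A₀, …, A_{f−1} be r × r matrices with entries in R satisfying π^c·R^r ⊆ Aᵢ·R^r for every i. Suppose λ₀, …, λ_{f−1} are nonzero elements of F for which there exist R-lattices L₀, L₁, …, L_f in F^r with L_f = L₀ (each Lᵢ a finitely generated R-submodule of F^r spanning F^r over F) such that (λᵢAᵢ)(Lᵢ) ⊆ L_{i+1} and π^c·L_{i+1} ⊆ (λᵢAᵢ)(Lᵢ) for every i. Then −c·f ≤ v(λ₀) + v(λ₁) + ⋯ + v(λ_{f−1}) ≤ c·f. -/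
/-!
Compose the twisted maps around the cycle: `T = (λ_{f-1} A_{f-1}) ∘ ⋯ ∘ (λ₀ A₀)` satisfies
`T L₀ ⊆ L₀` and `π^{cf} L₀ ⊆ T L₀`. Computing `det T` in an `R`-basis of `L₀` shows that it is
an element of `R` dividing `π^{cfr}`, and `det Aᵢ ∣ π^{cr}` in the same way. As
`det T = (∏ λᵢ)^r ∏ det Aᵢ`, the `r`-th powers of `π^{cf} ∏ λᵢ` and `π^{cf} (∏ λᵢ)⁻¹` lie in `R`;
since `R` is integrally closed so do these elements themselves, i.e. `|v(∏ λᵢ)| ≤ cf`.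
-/

open Module

theorem LinearMap.det_dvd_pow_finrank_of_forall_exists_eq_smul {R M : Type*} [CommRing R]
    [AddCommGroup M] [Module R M] [Module.Free R M] [Module.Finite R M]
    (T : Module.End R M) (a : R) (h : ∀ y, ∃ x, T x = a • y) :
    LinearMap.det T ∣ a ^ finrank R M := by
  choose s hs using h
  let b := Module.Free.chooseBasis R M
  have hTS : T ∘ₗ b.constr R (s ∘ b) = a • LinearMap.id := b.ext fun j => by simp [hs]
  refine ⟨LinearMap.det (b.constr R (s ∘ b)), ?_⟩
  rw [← LinearMap.det_comp, hTS, LinearMap.det_smul, LinearMap.det_id, mul_one]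

theorem Matrix.det_dvd_pow_of_forall_exists_mulVec_eq_smul {R : Type*} [CommRing R]
    [Nontrivial R] {r : ℕ} (A : Matrix (Fin r) (Fin r) R) (a : R)
    (h : ∀ x, ∃ y, A.mulVec y = a • x) : A.det ∣ a ^ r := by
  simpa [LinearMap.det_toLin'] using
    LinearMap.det_dvd_pow_finrank_of_forall_exists_eq_smul (Matrix.toLin' A) a h

section Lattice

variable {R K V : Type*} [CommRing R] [Field K] [Algebra R K] [IsFractionRing R K]
  [AddCommGroup V] [Module K V] [Module R V] [IsScalarTower R K V]

theorem Module.Basis.extendOfIsLattice_repr_coe {M : Submodule R V} [M.IsLattice K] {ι : Type*}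
    [Fintype ι] (b : Basis ι R M) (m : M) (i : ι) :
    (b.extendOfIsLattice K).repr m i = algebraMap R K (b.repr m i) := by
  have : (m : V) = ∑ k, algebraMap R K (b.repr m k) • b.extendOfIsLattice K k := by
    conv_lhs => rw [← b.sum_repr m]
    simp only [Submodule.coe_sum, Submodule.coe_smul, algebraMap_smul,
      Basis.extendOfIsLattice_apply]
  rw [this, Basis.repr_sum_self]

variable [IsDomain R] [IsPrincipalIdealRing R]

theorem Submodule.IsLattice.algebraMap_det_restrict (M : Submodule R V) [M.IsLattice K]
    (T : Module.End K V) (hT : ∀ x ∈ M, T x ∈ M) :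
    algebraMap R K (LinearMap.det ((T.restrictScalars R).restrict hT)) = LinearMap.det T := by
  classical
  let b := Module.Free.chooseBasis R M
  let b' := b.extendOfIsLattice K
  have hmat : LinearMap.toMatrix b' b' T =
      (LinearMap.toMatrix b b ((T.restrictScalars R).restrict hT)).map (algebraMap R K) := by
    ext i j
    simp only [LinearMap.toMatrix_apply, Matrix.map_apply, b', ← b.extendOfIsLattice_repr_coe,
      Basis.extendOfIsLattice_apply]
    rfl
  rw [← LinearMap.det_toMatrix b', hmat, ← LinearMap.det_toMatrix b]
  exact RingHom.map_det _ _

theorem Submodule.IsLattice.exists_algebraMap_eq_det_dvd (M : Submodule R V) [M.IsLattice K]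
    (T : Module.End K V) (hT : ∀ x ∈ M, T x ∈ M) (a : R) (ha : ∀ y ∈ M, ∃ x ∈ M, T x = a • y) :
    ∃ d : R, algebraMap R K d = LinearMap.det T ∧ d ∣ a ^ finrank K V := by
  refine ⟨_, algebraMap_det_restrict M T hT, ?_⟩
  have hrank : finrank R M = finrank K V := congrArg Cardinal.toNat (IsLattice.rank' K M)
  rw [← hrank]
  refine LinearMap.det_dvd_pow_finrank_of_forall_exists_eq_smul _ a fun y => ?_
  obtain ⟨x, hx, hTx⟩ := ha y y.2
  exact ⟨⟨x, hx⟩, Subtype.ext hTx⟩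

end Lattice

def chainProd {M : Type*} [Monoid M] (g : ℕ → M) : ℕ → M
  | 0 => 1
  | n + 1 => g n * chainProd g n

theorem map_chainProd {M N G : Type*} [Monoid M] [CommMonoid N] [FunLike G M N]
    [MonoidHomClass G M N] (φ : G) (g : ℕ → M) (n : ℕ) :
    φ (chainProd g n) = ∏ i ∈ Finset.range n, φ (g i) := by
  induction n with
  | zero => simp [chainProd]
  | succ n ih => rw [chainProd, map_mul, ih, Finset.prod_range_succ, mul_comm]

section Chain

variable {K V : Type*} [CommSemiring K] [AddCommMonoid V] [Module K V]
  (g : ℕ → Module.End K V) (L : ℕ → Set V)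

theorem chainProd_mem (hmap : ∀ i, ∀ x ∈ L i, g i x ∈ L (i + 1)) (n : ℕ) :
    ∀ x ∈ L 0, chainProd g n x ∈ L n := by
  induction n with
  | zero => exact fun x hx => hx
  | succ n ih => exact fun x hx => hmap n _ (ih x hx)

theorem exists_mem_chainProd_eq_pow_smul (a : K)
    (hdiv : ∀ i, ∀ y ∈ L (i + 1), ∃ x ∈ L i, g i x = a • y) (n : ℕ) :
    ∀ y ∈ L n, ∃ x ∈ L 0, chainProd g n x = a ^ n • y := by
  induction n with
  | zero => exact fun y hy => ⟨y, hy, by simp [chainProd]⟩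
  | succ n ih =>
    intro y hy
    obtain ⟨x', hx', hgx'⟩ := hdiv n y hy
    obtain ⟨x, hx, hxx'⟩ := ih x' hx'
    refine ⟨x, hx, ?_⟩
    rw [chainProd, Module.End.mul_apply, hxx', map_smul, hgx', smul_smul, pow_succ]

end Chain

theorem IsIntegrallyClosed.exists_algebraMap_eq_of_pow {R K : Type*} [CommRing R] [CommRing K]
    [Algebra R K] [IsFractionRing R K] [IsIntegrallyClosed R] {x : K} {n : ℕ} (hn : n ≠ 0)
    {y : R} (hy : algebraMap R K y = x ^ n) : ∃ z, algebraMap R K z = x :=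
  IsIntegrallyClosed.isIntegral_iff.mp <|
    IsIntegral.of_pow (Nat.pos_of_ne_zero hn) (hy ▸ isIntegral_algebraMap)

namespace IsDiscreteValuationRing

variable {R F : Type*} [CommRing R] [IsDomain R] [IsDiscreteValuationRing R] [Field F]
  [Algebra R F] [IsFractionRing R F] {π : R}

theorem exists_eq_unit_mul_zpow_of_algebraMap_eq_mul (hπ : Irreducible π) {x : F} (hx : x ≠ 0)
    (m : ℕ) {a b : R} (ha : algebraMap R F a = algebraMap R F π ^ m * x)
    (hb : algebraMap R F b = algebraMap R F π ^ m * x⁻¹) :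
    ∃ (k : ℤ) (u : Rˣ), -(m : ℤ) ≤ k ∧ k ≤ m ∧ x = algebraMap R F u * algebraMap R F π ^ k := by
  have hπF : algebraMap R F π ≠ 0 := by simpa using hπ.ne_zero
  have hab : a * b = π ^ (m + m) := IsFractionRing.injective R F <| by
    rw [map_mul, ha, hb, map_pow, pow_add]
    field_simp
  obtain ⟨i, hi, hai⟩ := (dvd_prime_pow hπ.prime (m + m)).mp ⟨b, hab.symm⟩
  obtain ⟨u, hu⟩ := hai.symm
  refine ⟨i - m, u, by omega, by omega, ?_⟩
  have hu' := congrArg (algebraMap R F) hu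
  rw [map_mul, map_pow, ha] at hu'
  rw [zpow_sub₀ hπF, zpow_natCast, zpow_natCast]
  field_simp
  linear_combination -hu'

theorem exists_eq_unit_mul_zpow_of_pow_mul_algebraMap_eq (hπ : Irreducible π) {x : F}
    {n m : ℕ} (hn : n ≠ 0) {d e : R} (hd : d ∣ (π ^ m) ^ n) (he : e ∣ (π ^ m) ^ n)
    (h : x ^ n * algebraMap R F e = algebraMap R F d) :
    ∃ (k : ℤ) (u : Rˣ), -(m : ℤ) ≤ k ∧ k ≤ m ∧ x = algebraMap R F u * algebraMap R F π ^ k := by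
  obtain ⟨d', hdd'⟩ := hd
  obtain ⟨e', hee'⟩ := he
  have hx : x ≠ 0 := by
    rintro rfl
    simp only [ne_eq, hn, not_false_eq_true, zero_pow, zero_mul] at h
    have : d = 0 := IsFractionRing.injective R F (by rw [← h, map_zero])
    simp [this, hπ.ne_zero] at hdd'
  have hd' := congrArg (algebraMap R F) hdd'
  have he' := congrArg (algebraMap R F) hee'
  simp only [map_mul, map_pow] at hd' he'
  obtain ⟨a, ha⟩ := IsIntegrallyClosed.exists_algebraMap_eq_of_pow (R := R) hn
    (y := d * e') (x := algebraMap R F π ^ m * x) (by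
      rw [map_mul, mul_pow]
      linear_combination (-algebraMap R F e') * h - x ^ n * he')
  obtain ⟨b, hb⟩ := IsIntegrallyClosed.exists_algebraMap_eq_of_pow (R := R) hn
    (y := e * d') (x := algebraMap R F π ^ m * x⁻¹) (by
      rw [map_mul, mul_pow, inv_pow]
      field_simp
      linear_combination (algebraMap R F d') * h - hd')
  exact exists_eq_unit_mul_zpow_of_algebraMap_eq_mul hπ hx m ha hb

end IsDiscreteValuationRing

theorem sum_val_le_of_lattice_chain_general
    {R F : Type*} [CommRing R] [IsDomain R] [IsDiscreteValuationRing R]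
    [Field F] [Algebra R F] [IsFractionRing R F]
    (π : R) (hπ : Irreducible π)
    (r f : ℕ) (hr : 1 ≤ r) [NeZero f] (c : ℕ)
    (A : Fin f → Matrix (Fin r) (Fin r) R)
    (hA : ∀ i, ∀ x : Fin r → R, ∃ y : Fin r → R, (A i).mulVec y = π ^ c • x)
    (lam : Fin f → F)
    (L : Fin f → Submodule R (Fin r → F))
    (hfg : ∀ i, (L i).FG)
    (hspan : ∀ i, Submodule.span F ((L i : Set (Fin r → F))) = ⊤)
    (hmap : ∀ i, ∀ x ∈ L i,
      lam i • ((A i).map (algebraMap R F)).mulVec x ∈ L (i + 1))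
    (hdiv : ∀ i, ∀ y ∈ L (i + 1), ∃ x ∈ L i,
      lam i • ((A i).map (algebraMap R F)).mulVec x = algebraMap R F (π ^ c) • y) :
    ∃ (k : ℤ) (u : Rˣ), -(c * f : ℤ) ≤ k ∧ k ≤ (c * f : ℤ) ∧
      (∏ i, lam i) = algebraMap R F u * (algebraMap R F π) ^ k := by
  open Fin.NatCast in
  let g (i : ℕ) : Module.End F (Fin r → F) := lam i • Matrix.toLin' ((A i).map (algebraMap R F))
  have hsucc (i : ℕ) : ((i + 1 : ℕ) : Fin f) = (i : Fin f) + 1 := by push_cast; rfl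
  have hT_mem := chainProd_mem g (fun n => L n) (fun i x hx => hsucc i ▸ hmap i x hx) f
  have hT_div := exists_mem_chainProd_eq_pow_smul g (fun n => L n) _
    (fun i y hy => hdiv i y (hsucc i ▸ hy)) f
  simp only [Fin.natCast_self, Nat.cast_zero, SetLike.mem_coe, ← map_pow, algebraMap_smul,
    ← pow_mul] at hT_mem hT_div
  have : (L 0).IsLattice F := ⟨hfg 0, hspan 0⟩
  obtain ⟨d, hdT, hd⟩ :=
    Submodule.IsLattice.exists_algebraMap_eq_det_dvd (L 0) _ hT_mem _ hT_div
  have hdetT : LinearMap.det (chainProd g f) =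
      (∏ i, lam i) ^ r * algebraMap R F (∏ i, (A i).det) := by
    rw [map_chainProd (LinearMap.det (A := F) (M := Fin r → F)),
      ← Fin.prod_univ_eq_prod_range (fun i => LinearMap.det (g i))]
    simp only [g, Fin.cast_val_eq_self, LinearMap.det_smul, LinearMap.det_toLin',
      Module.finrank_fin_fun, map_prod, RingHom.map_det, RingHom.mapMatrix_apply,
      Finset.prod_mul_distrib, Finset.prod_pow]
  have hdetA : ∏ i, (A i).det ∣ (π ^ (c * f)) ^ r := calc
    ∏ i, (A i).det ∣ ∏ _i : Fin f, (π ^ c) ^ r := Finset.prod_dvd_prod_of_dvd _ _ fun i _ =>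
      (A i).det_dvd_pow_of_forall_exists_mulVec_eq_smul _ (hA i)
    _ = (π ^ (c * f)) ^ r := by rw [Finset.prod_const, Finset.card_fin]; ring
  obtain ⟨k, u, hk₁, hk₂, hk⟩ :=
    IsDiscreteValuationRing.exists_eq_unit_mul_zpow_of_pow_mul_algebraMap_eq hπ (by omega) (by simpa using hd) hdetA (hdetT ▸ hdT).symm
  exact ⟨k, u, by exact_mod_cast hk₁, by exact_mod_cast hk₂, hk⟩

/-- Claim 1 of the lemma on twists of F-crystals. Let `R` be a discrete valuation ring
with fraction field `F` and uniformizer `π`. Let `A₀, …, A_{f-1}` be `r × r` matrices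
over `R` with `π^c • R^r ⊆ Aᵢ • R^r`, and let `λ₀, …, λ_{f-1} ∈ Fˣ` be such that there
are `R`-lattices `L₀, …, L_f = L₀` in `F^r` (indexed cyclically by `Fin f`) with
`(λᵢ Aᵢ)(Lᵢ) ⊆ L_{i+1}` and `π^c • L_{i+1} ⊆ (λᵢ Aᵢ)(Lᵢ)` for every `i`. Then
`-c·f ≤ v(λ₀) + ⋯ + v(λ_{f-1}) ≤ c·f`, expressed as: `∏ᵢ λᵢ = u * π^k` for a unit
`u ∈ Rˣ` and an integer `k` with `-c·f ≤ k ≤ c·f`. -/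
theorem sum_val_le_of_lattice_chain
    {R F : Type*} [CommRing R] [IsDomain R] [IsDiscreteValuationRing R]
    [Field F] [Algebra R F] [IsFractionRing R F]
    (π : R) (hπ : Irreducible π)
    (r f : ℕ) (hr : 1 ≤ r) [NeZero f] (c : ℕ)
    (A : Fin f → Matrix (Fin r) (Fin r) R)
    (hA : ∀ i, ∀ x : Fin r → R, ∃ y : Fin r → R, (A i).mulVec y = π ^ c • x)
    (lam : Fin f → F) (hlam : ∀ i, lam i ≠ 0)
    (L : Fin f → Submodule R (Fin r → F))
    (hfg : ∀ i, (L i).FG)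
    (hspan : ∀ i, Submodule.span F ((L i : Set (Fin r → F))) = ⊤)
    (hmap : ∀ i, ∀ x ∈ L i,
      lam i • ((A i).map (algebraMap R F)).mulVec x ∈ L (i + 1))
    (hdiv : ∀ i, ∀ y ∈ L (i + 1), ∃ x ∈ L i,
      lam i • ((A i).map (algebraMap R F)).mulVec x = algebraMap R F (π ^ c) • y) :
    ∃ (k : ℤ) (u : Rˣ), -(c * f : ℤ) ≤ k ∧ k ≤ (c * f : ℤ) ∧
      (∏ i, lam i) = algebraMap R F u * (algebraMap R F π) ^ k :=
  sum_val_le_of_lattice_chain_general π hπ r f hr c A hA lam L hfg hspan hmap hdiv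
end
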